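/- Let r > 0 be a real number and let λ, u be real numbers. Then λ = [λ + r·u]_- if and only if the complementarity conditions hold: u ≥ 0, λ ≤ 0, and λ·u = 0. -/

import Mathlib

/-- Negative part of a real number: `[z]_- = min(0, z)`. -/
noncomputable def negpart (z : ℝ) : ℝ := min 0 z

theorem eq_min_zero_add_iff {α : Type*} [AddCommGroup α] [LinearOrder α] [IsOrderedAddMonoid α]
    (x y : α) : x = min 0 (x + y) ↔ 0 ≤ y ∧ x ≤ 0 ∧ (x = 0 ∨ y = 0) := by
  rw [eq_comm, min_eq_iff, add_eq_left]
  constructor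
  · rintro (⟨rfl, hy⟩ | ⟨rfl, hx⟩)
    · exact ⟨by simpa using hy, le_rfl, .inl rfl⟩
    · exact ⟨le_rfl, by simpa using hx, .inr rfl⟩
  · rintro ⟨hy, hx, rfl | rfl⟩
    · exact .inl ⟨rfl, by simpa using hy⟩
    · exact .inr ⟨rfl, by simpa using hx⟩

/-- For `r > 0`, `λ = [λ + r u]_-` iff the complementarity conditions
`u ≥ 0`, `λ ≤ 0`, `λ * u = 0` hold. -/
theorem augLag_iff_complementarity (r l u : ℝ) (hr : 0 < r) :
    l = negpart (l + r * u) ↔ (u ≥ 0 ∧ l ≤ 0 ∧ l * u = 0) := by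
  rw [negpart, eq_min_zero_add_iff, mul_nonneg_iff_of_pos_left hr, mul_eq_zero_iff_left hr.ne',
    mul_eq_zero, ge_iff_le]
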